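/- Let ρ > 0 be a real parameter and define H(q, p̄) = 2·∫₀^{p̄} log((ρ + e^ξ)/(1 + ρ·e^ξ)) dξ + 2·∫₀^{q} log((ρ + e^ξ)/(1 + ρ·e^ξ)) dξ. Then the MKdV map of one degree of freedom, p̄ = p + 2·log((1 + ρ·e^q)/(ρ + e^q)), q̄ = q + 2·log((ρ + e^{p̄})/(1 + ρ·e^{p̄})), satisfies the discrete Hamilton equations p̄ − p = −∂H/∂q (q, p̄) and q̄ − q = ∂H/∂p̄ (q, p̄); that is, H is a generating function of the map. -/

import Mathlib

noncomputable section

/-- The discrete Hamiltonian (generating function) of the one-degree-of-freedom MKdV map: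
`H(q,p̄) = 2∫₀^{p̄} log((ρ+e^ξ)/(1+ρe^ξ)) dξ + 2∫₀^{q} log((ρ+e^ξ)/(1+ρe^ξ)) dξ`. -/
def mkdvH (ρ : ℝ) (q pbar : ℝ) : ℝ :=
  2 * (∫ ξ in (0:ℝ)..pbar, Real.log ((ρ + Real.exp ξ) / (1 + ρ * Real.exp ξ))) +
  2 * (∫ ξ in (0:ℝ)..q, Real.log ((ρ + Real.exp ξ) / (1 + ρ * Real.exp ξ)))

def mkdvDensity (ρ ξ : ℝ) : ℝ :=
  Real.log ((ρ + Real.exp ξ) / (1 + ρ * Real.exp ξ))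

lemma log_div_eq_neg_mkdvDensity (ρ ξ : ℝ) :
    Real.log ((1 + ρ * Real.exp ξ) / (ρ + Real.exp ξ)) = -mkdvDensity ρ ξ := by
  rw [mkdvDensity, ← Real.log_inv, inv_div]

lemma continuous_mkdvDensity {ρ : ℝ} (hρ : 0 ≤ ρ) : Continuous (mkdvDensity ρ) := by
  have hnum : ∀ ξ, 0 < ρ + Real.exp ξ := fun ξ => by positivity
  have hden : ∀ ξ, 0 < 1 + ρ * Real.exp ξ := fun ξ => by positivity
  exact ((continuous_const.add Real.continuous_exp).div (by fun_prop) fun ξ => (hden ξ).ne').log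
    fun ξ => (div_pos (hnum ξ) (hden ξ)).ne'

lemma hasDerivAt_integral_mkdvDensity {ρ : ℝ} (hρ : 0 ≤ ρ) (b : ℝ) :
    HasDerivAt (fun u => ∫ ξ in (0:ℝ)..u, mkdvDensity ρ ξ) (mkdvDensity ρ b) b :=
  ((continuous_mkdvDensity hρ).integral_hasStrictDerivAt 0 b).hasDerivAt

lemma hasDerivAt_mkdvH_fst {ρ : ℝ} (hρ : 0 ≤ ρ) (q pbar : ℝ) :
    HasDerivAt (fun s => mkdvH ρ s pbar) (2 * mkdvDensity ρ q) q :=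
  ((hasDerivAt_integral_mkdvDensity hρ q).const_mul 2).const_add _

lemma hasDerivAt_mkdvH_snd {ρ : ℝ} (hρ : 0 ≤ ρ) (q pbar : ℝ) :
    HasDerivAt (fun s => mkdvH ρ q s) (2 * mkdvDensity ρ pbar) pbar :=
  ((hasDerivAt_integral_mkdvDensity hρ pbar).const_mul 2).add_const _

/-- The one-degree-of-freedom MKdV map satisfies the discrete Hamilton equations
`p̄ − p = −∂H/∂q (q,p̄)` and `q̄ − q = ∂H/∂p̄ (q,p̄)` for the generating function
`H(q,p̄) = 2∫₀^{p̄} log((ρ+e^ξ)/(1+ρe^ξ)) dξ + 2∫₀^{q} log((ρ+e^ξ)/(1+ρe^ξ)) dξ`, `ρ > 0`. -/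
theorem mkdv_map_discrete_hamilton (ρ : ℝ) (hρ : 0 < ρ) (q p : ℝ)
    (pbar : ℝ)
    (hpbar : pbar = p + 2 * Real.log ((1 + ρ * Real.exp q) / (ρ + Real.exp q)))
    (qbar : ℝ)
    (hqbar : qbar = q + 2 * Real.log ((ρ + Real.exp pbar) / (1 + ρ * Real.exp pbar))) :
    pbar - p = -(deriv (fun s => mkdvH ρ s pbar) q) ∧
    qbar - q = deriv (fun s => mkdvH ρ q s) pbar := by
  constructor
  · rw [(hasDerivAt_mkdvH_fst hρ.le q pbar).deriv, hpbar, log_div_eq_neg_mkdvDensity]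
    ring
  · rw [(hasDerivAt_mkdvH_snd hρ.le q pbar).deriv, hqbar, mkdvDensity]
    ring
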